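/- Let g(w) = (1/2)·w²·e^{-w}·1{w>0}, and let P_θ be the probability measure on ℝ×{−1,+1} with density f_θ(y,z) = g(y−θ)·1{z=+1} + g(θ−y)·1{z=−1} with respect to λ = 𝔪 ⊗ ν (𝔪 Lebesgue, ν uniform on {−1,+1}). Then for every θ ∈ ℝ and every t > 0, the part of P_{θ+t} that is singular with respect to P_θ has total mass P_{θ+t}({x : f_θ(x) = 0}) = (1/2)∫_0^t g(u) du ≤ t³/12; in particular this singular mass is O(|t|³) (and hence o(|t|²)) as t → 0. -/

import Mathlib

open MeasureTheory Real Set Filter Asymptotics Topology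

/- We model the two-point space `{−1,+1}` by `Bool`, with `true ↔ +1` and `false ↔ −1`. -/

/-- The density `g(w) = (1/2) w² e^{-w} 1{w>0}`. -/
noncomputable def g (w : ℝ) : ℝ := if 0 < w then (1/2) * w^2 * Real.exp (-w) else 0

/-- The uniform probability measure `ν` on `{−1,+1}` (mass `1/2` at each point). -/
noncomputable def ν : Measure Bool :=
  (1/2 : ENNReal) • Measure.dirac true + (1/2 : ENNReal) • Measure.dirac false

instance : IsProbabilityMeasure ν := by
  constructor
  simp [ν]
  rw [ENNReal.inv_two_add_inv_two]

/-- The dominating measure `λ = 𝔪 ⊗ ν` on `ℝ × {−1,+1}`. -/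
noncomputable def lam : Measure (ℝ × Bool) := (volume : Measure ℝ).prod ν

/-- The density `f_θ(y,z) = g(y−θ) 1{z=+1} + g(θ−y) 1{z=−1}`. -/
noncomputable def f (θ : ℝ) (x : ℝ × Bool) : ℝ :=
  if x.2 then g (x.1 - θ) else g (θ - x.1)

/-- The probability measure `P_θ` with density `f_θ` with respect to `λ`. -/
noncomputable def P (θ : ℝ) : Measure (ℝ × Bool) :=
  lam.withDensity fun x => ENNReal.ofReal (f θ x)

/-! `f_θ` vanishes exactly on `{z = +1, y ≤ θ} ∪ {z = −1, y ≥ θ}`. Integrating `f_{θ+t}` over the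
two halves and translating gives `½∫_{-∞}^{-t} g + ½∫_{-∞}^{t} g`, and since `g` vanishes on
`(-∞, 0]` this is `½∫_0^{|t|} g`. The cubic bound comes from `g u ≤ u²/2`. -/

lemma g_eq (w : ℝ) : g w = 1/2 * max w 0 ^ 2 * Real.exp (-w) := by
  unfold g
  split_ifs with hw
  · rw [max_eq_left hw.le]
  · rw [max_eq_right (not_lt.1 hw)]; ring

lemma continuous_g : Continuous g := by
  simp only [funext g_eq]; fun_prop

lemma g_nonneg (w : ℝ) : 0 ≤ g w := by
  rw [g_eq]; positivity

lemma g_eq_zero_iff {w : ℝ} : g w = 0 ↔ w ≤ 0 := by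
  rw [g_eq]
  simp [Real.exp_ne_zero]

lemma g_le_sq_div_two (w : ℝ) : g w ≤ w ^ 2 / 2 := by
  unfold g
  split_ifs with hw
  · have : Real.exp (-w) ≤ 1 := Real.exp_le_one_iff.2 (by linarith)
    nlinarith [sq_nonneg w]
  · positivity

lemma integral_g_le {s : ℝ} (hs : 0 ≤ s) : ∫ u in (0:ℝ)..s, g u ≤ s ^ 3 / 6 :=
  calc ∫ u in (0:ℝ)..s, g u ≤ ∫ u in (0:ℝ)..s, u ^ 2 / 2 :=
        intervalIntegral.integral_mono hs (continuous_g.intervalIntegrable _ _)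
          ((by fun_prop : Continuous fun u : ℝ => u ^ 2 / 2).intervalIntegrable _ _) g_le_sq_div_two
    _ = s ^ 3 / 6 := by
        rw [intervalIntegral.integral_div, integral_pow]; ring

lemma setLIntegral_Iic_g_of_nonpos {s : ℝ} (hs : s ≤ 0) :
    ∫⁻ u in Iic s, ENNReal.ofReal (g u) = 0 := by
  rw [setLIntegral_congr_fun measurableSet_Iic
    (fun u (hu : u ≤ s) => by rw [g_eq_zero_iff.2 (hu.trans hs), ENNReal.ofReal_zero])]
  exact lintegral_zero

lemma setLIntegral_Iic_g_of_nonneg {s : ℝ} (hs : 0 ≤ s) :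
    ∫⁻ u in Iic s, ENNReal.ofReal (g u) = ENNReal.ofReal (∫ u in (0:ℝ)..s, g u) := by
  rw [← Iic_union_Ioc_eq_Iic hs, lintegral_union measurableSet_Ioc (Iic_disjoint_Ioc le_rfl),
    setLIntegral_Iic_g_of_nonpos le_rfl, zero_add,
    ← ofReal_integral_eq_lintegral_ofReal continuous_g.integrableOn_Ioc
      (ae_of_all _ g_nonneg), intervalIntegral.integral_of_le hs]

lemma lintegral_lam {F : ℝ × Bool → ENNReal} (hF : Measurable F) :
    ∫⁻ x, F x ∂lam = 2⁻¹ * (∫⁻ y, F (y, true)) + 2⁻¹ * ∫⁻ y, F (y, false) := by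
  rw [lam, lintegral_prod_symm' F hF]
  simp only [ν, lintegral_add_measure, lintegral_smul_measure, lintegral_dirac, one_div, smul_eq_mul]

lemma measurable_f (θ : ℝ) : Measurable (f θ) := by
  unfold f
  refine Measurable.ite (measurable_snd (measurableSet_singleton true)) ?_ ?_
  · exact continuous_g.measurable.comp (measurable_fst.sub measurable_const)
  · exact continuous_g.measurable.comp (measurable_const.sub measurable_fst)

lemma indicator_zeroSet_true (θ θ' y : ℝ) :
    {x | f θ x = 0}.indicator (fun x => ENNReal.ofReal (f θ' x)) (y, true)
      = (Iic (θ - θ')).indicator (fun u => ENNReal.ofReal (g u)) (y - θ') := by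
  have : y - θ ≤ 0 ↔ y - θ' ≤ θ - θ' := by constructor <;> intro h <;> linarith
  simp [indicator_apply, f, g_eq_zero_iff, this]

lemma indicator_zeroSet_false (θ θ' y : ℝ) :
    {x | f θ x = 0}.indicator (fun x => ENNReal.ofReal (f θ' x)) (y, false)
      = (Iic (θ' - θ)).indicator (fun u => ENNReal.ofReal (g u)) (θ' - y) := by
  have : θ - y ≤ 0 ↔ θ' - y ≤ θ' - θ := by constructor <;> intro h <;> linarith
  simp [indicator_apply, f, g_eq_zero_iff, this]

lemma P_zeroSet (θ θ' : ℝ) :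
    P θ' {x | f θ x = 0} = 2⁻¹ * (∫⁻ u in Iic (θ - θ'), ENNReal.ofReal (g u))
      + 2⁻¹ * ∫⁻ u in Iic (θ' - θ), ENNReal.ofReal (g u) := by
  have hS : MeasurableSet {x | f θ x = 0} := measurable_f θ (measurableSet_singleton 0)
  rw [P, withDensity_apply _ hS, ← lintegral_indicator hS,
    lintegral_lam ((measurable_f θ').ennreal_ofReal.indicator hS)]
  simp only [indicator_zeroSet_true, indicator_zeroSet_false]
  rw [lintegral_sub_right_eq_self ((Iic (θ - θ')).indicator fun u => ENNReal.ofReal (g u)),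
    lintegral_sub_left_eq_self ((Iic (θ' - θ)).indicator fun u => ENNReal.ofReal (g u)),
    lintegral_indicator measurableSet_Iic, lintegral_indicator measurableSet_Iic]

lemma P_add_zeroSet (θ t : ℝ) :
    P (θ + t) {x | f θ x = 0} = ENNReal.ofReal ((1/2) * ∫ u in (0:ℝ)..|t|, g u) := by
  have half : ENNReal.ofReal (1/2) = 2⁻¹ := by
    rw [one_div, ENNReal.ofReal_inv_of_pos two_pos, ENNReal.ofReal_ofNat]
  rw [P_zeroSet, ENNReal.ofReal_mul (by norm_num), half,
    show θ - (θ + t) = -t by ring, show θ + t - θ = t by ring]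
  rcases le_total 0 t with ht | ht
  · rw [setLIntegral_Iic_g_of_nonpos (s := -t) (neg_nonpos.2 ht), setLIntegral_Iic_g_of_nonneg ht,
      abs_of_nonneg ht, mul_zero, zero_add]
  · rw [setLIntegral_Iic_g_of_nonpos ht, setLIntegral_Iic_g_of_nonneg (s := -t) (neg_nonneg.2 ht),
      abs_of_nonpos ht, mul_zero, add_zero]

lemma toReal_P_add_zeroSet_le (θ t : ℝ) :
    (P (θ + t) {x | f θ x = 0}).toReal ≤ |t| ^ 3 / 12 := by
  have hint : 0 ≤ ∫ u in (0:ℝ)..|t|, g u :=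
    intervalIntegral.integral_nonneg (abs_nonneg t) fun u _ => g_nonneg u
  rw [P_add_zeroSet, ENNReal.toReal_ofReal (by positivity)]
  linarith [integral_g_le (abs_nonneg t)]

/-- for every `θ` and every `t > 0`, the part of `P_{θ+t}` singular with
respect to `P_θ` has total mass
`P_{θ+t}({x : f_θ(x) = 0}) = (1/2)∫_0^t g(u) du ≤ t³/12`; in particular this singular
mass is `O(|t|³)` (hence `o(|t|²)`) as `t → 0`. -/
theorem stmt7 (θ : ℝ) :
    (∀ t : ℝ, 0 < t →
      P (θ + t) {x : ℝ × Bool | f θ x = 0}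
          = ENNReal.ofReal ((1/2) * ∫ u in (0:ℝ)..t, g u) ∧
        (1/2) * (∫ u in (0:ℝ)..t, g u) ≤ t^3 / 12) ∧
    (fun t : ℝ => (P (θ + t) {x : ℝ × Bool | f θ x = 0}).toReal)
      =O[𝓝 0] fun t : ℝ => |t|^3 := by
  refine ⟨fun t ht => ⟨by rw [P_add_zeroSet, abs_of_pos ht], ?_⟩, ?_⟩
  · linarith [integral_g_le ht.le]
  · refine IsBigO.of_bound (1/12) (Eventually.of_forall fun t => ?_)
    rw [Real.norm_of_nonneg ENNReal.toReal_nonneg, Real.norm_of_nonneg (by positivity)]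
    linarith [toReal_P_add_zeroSet_le θ t]
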